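/- For all indices i, j, k one has C^{ijk}(p) = −((m−1)(m−2)/(2K))·(a^{ijk} − a^{ij}a^k − a^{jk}a^i − a^{ki}a^j + 2a^i a^j a^k). -/

import Mathlib

/-!
Write `m = M + 3` and `B_c(p) = ∑ c ι ∏ p (ι t)` for a symmetric coefficient family `c`; then
`∂_k B_c = N' · B_{c(k,·)}` with `N'` the arity of `c`. From `K = A^{1/m}` this gives `∂_k K = a^k`,
and the quotient rule then gives `∂_k a^i = (m-1)/K · (a^{ik} - a^i a^k)` and
`∂_k a^{ij} = (m-2)/K · (a^{ijk} - a^{ij} a^k)`. Hence `g^{ij} = (m-1) a^{ij} - (m-2) a^i a^j` on the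
open set `A > 0`, and one more derivative of this closed form is the claimed formula for `C^{ijk}`.
-/

open Finset

noncomputable section

/-- `A(p) = ∑ a^{i₁…i_m} p_{i₁}⋯p_{i_m}`, where `m = M + 3 ≥ 3`. -/
def Afun {n M : ℕ} (a : (Fin (M + 3) → Fin n) → ℝ) (p : Fin n → ℝ) : ℝ :=
  ∑ ι : Fin (M + 3) → Fin n, a ι * ∏ t, p (ι t)

/-- `K(p) = A(p)^{1/m}`. -/
def Kfun {n M : ℕ} (a : (Fin (M + 3) → Fin n) → ℝ) (p : Fin n → ℝ) : ℝ :=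
  Afun a p ^ ((1 : ℝ) / (M + 3))

/-- `a^i = (∑ a^{i i₂…i_m} p_{i₂}⋯p_{i_m}) / K^{m-1}`. -/
def aU1 {n M : ℕ} (a : (Fin (M + 3) → Fin n) → ℝ) (i : Fin n) (p : Fin n → ℝ) : ℝ :=
  (∑ ι : Fin (M + 2) → Fin n, a (Fin.cons i ι) * ∏ t, p (ι t)) / Kfun a p ^ (M + 2)

/-- `a^{ij} = (∑ a^{i j i₃…i_m} p_{i₃}⋯p_{i_m}) / K^{m-2}`. -/
def aU2 {n M : ℕ} (a : (Fin (M + 3) → Fin n) → ℝ) (i j : Fin n) (p : Fin n → ℝ) : ℝ :=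
  (∑ ι : Fin (M + 1) → Fin n, a (Fin.cons i (Fin.cons j ι)) * ∏ t, p (ι t)) / Kfun a p ^ (M + 1)

/-- `a^{ijk} = (∑ a^{i j k i₄…i_m} p_{i₄}⋯p_{i_m}) / K^{m-3}`. -/
def aU3 {n M : ℕ} (a : (Fin (M + 3) → Fin n) → ℝ) (i j k : Fin n) (p : Fin n → ℝ) : ℝ :=
  (∑ ι : Fin M → Fin n, a (Fin.cons i (Fin.cons j (Fin.cons k ι))) * ∏ t, p (ι t)) / Kfun a p ^ M

/-- Partial derivative `∂f/∂p_k` of a function of `p`. -/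
def pd {n : ℕ} (f : (Fin n → ℝ) → ℝ) (k : Fin n) (p : Fin n → ℝ) : ℝ :=
  deriv (fun t => f (Function.update p k t)) (p k)

/-- Fundamental metrical d-tensor `g^{ij} = (1/2) ∂²(K²)/∂p_i∂p_j`. -/
def gU {n M : ℕ} (a : (Fin (M + 3) → Fin n) → ℝ) (i j : Fin n) (p : Fin n → ℝ) : ℝ :=
  (1 / 2 : ℝ) * pd (fun q => pd (fun r => Kfun a r ^ 2) j q) i p

/-- Angular metrical d-tensor `h^{ij} = K ∂²K/∂p_i∂p_j`. -/
def hU {n M : ℕ} (a : (Fin (M + 3) → Fin n) → ℝ) (i j : Fin n) (p : Fin n → ℝ) : ℝ :=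
  Kfun a p * pd (fun q => pd (Kfun a) j q) i p

/-- v-torsion d-tensor `C^{ijk} = -(1/2) ∂g^{ij}/∂p_k`. -/
def CU {n M : ℕ} (a : (Fin (M + 3) → Fin n) → ℝ) (i j k : Fin n) (p : Fin n → ℝ) : ℝ :=
  -(1 / 2 : ℝ) * pd (gU a i j) k p

/-- Symmetry of `a` in all of its `m` indices. -/
def aSym {n M : ℕ} (a : (Fin (M + 3) → Fin n) → ℝ) : Prop :=
  ∀ (σ : Equiv.Perm (Fin (M + 3))) (ι : Fin (M + 3) → Fin n), a (ι ∘ σ) = a ι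


open Function

def homForm {n N : ℕ} (c : (Fin N → Fin n) → ℝ) (p : Fin n → ℝ) : ℝ :=
  ∑ ι : Fin N → Fin n, c ι * ∏ t, p (ι t)

def IsSymmCoeff {n N : ℕ} (c : (Fin N → Fin n) → ℝ) : Prop :=
  ∀ (σ : Equiv.Perm (Fin N)) (ι : Fin N → Fin n), c (ι ∘ σ) = c ι

lemma Fin.prod_univ_erase_eq_prod_succAbove {β : Type*} [CommMonoid β] {N : ℕ} (s : Fin (N + 1))
    (f : Fin (N + 1) → β) : ∏ t ∈ univ.erase s, f t = ∏ i, f (s.succAbove i) := by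
  rw [← compl_singleton, ← Fin.image_succAbove_univ,
    prod_image Fin.succAbove_right_injective.injOn]

lemma hasDerivAt_prod_update {n N : ℕ} (ι : Fin N → Fin n) (q : Fin n → ℝ) (k : Fin n) :
    HasDerivAt (fun x => ∏ t, update q k x (ι t))
      (∑ s, if ι s = k then ∏ t ∈ univ.erase s, q (ι t) else 0) (q k) := by
  have hfactor (s : Fin N) : HasDerivAt (fun x => update q k x (ι s))
      (if ι s = k then 1 else 0) (q k) := by
    by_cases h : ι s = k
    · simpa [h] using hasDerivAt_id' (q k)
    · simpa [h] using hasDerivAt_const (q k) (q (ι s))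
  simpa using HasDerivAt.fun_finsetProd (u := univ) fun s _ => hfactor s

namespace IsSymmCoeff

variable {n N : ℕ}

lemma cons {c : (Fin (N + 1) → Fin n) → ℝ} (hc : IsSymmCoeff c) (x : Fin n) :
    IsSymmCoeff fun ι => c (Fin.cons x ι) := by
  intro σ ι
  have hcomp : (Fin.cons x ι : Fin (N + 1) → Fin n) ∘ Equiv.Perm.decomposeFin.symm (0, σ) =
      Fin.cons x (ι ∘ σ) := by
    ext t
    cases t using Fin.cases <;>
      simp [Equiv.Perm.decomposeFin_symm_apply_zero, Equiv.Perm.decomposeFin_symm_apply_succ]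
  simpa only [hcomp] using hc (Equiv.Perm.decomposeFin.symm (0, σ)) (Fin.cons x ι)

lemma apply_insertNth {c : (Fin (N + 1) → Fin n) → ℝ} (hc : IsSymmCoeff c) (s : Fin (N + 1))
    (x : Fin n) (ι : Fin N → Fin n) : c (s.insertNth x ι) = c (Fin.cons x ι) := by
  rw [← Fin.cons_comp_cycleRange, hc]

lemma apply_cons_cons {c : (Fin (N + 2) → Fin n) → ℝ} (hc : IsSymmCoeff c) (x y : Fin n)
    (ι : Fin N → Fin n) : c (Fin.cons x (Fin.cons y ι)) = c (Fin.cons y (Fin.cons x ι)) := by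
  rw [← hc.apply_insertNth (Fin.succ 0), Fin.insertNth_succ_cons, Fin.insertNth_zero']

lemma sum_mul_ite_prod_erase {c : (Fin (N + 1) → Fin n) → ℝ} (hc : IsSymmCoeff c)
    (q : Fin n → ℝ) (k : Fin n) (s : Fin (N + 1)) :
    ∑ ι : Fin (N + 1) → Fin n, c ι * (if ι s = k then ∏ t ∈ univ.erase s, q (ι t) else 0) =
      homForm (fun ι => c (Fin.cons k ι)) q := by
  have hsplit (y : Fin n) (ι : Fin N → Fin n) :
      Fin.insertNthEquiv (fun _ => Fin n) s (y, ι) = s.insertNth y ι := rfl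
  rw [← (Fin.insertNthEquiv (fun _ => Fin n) s).sum_comp, Fintype.sum_prod_type, sum_comm]
  simp only [hsplit, Fin.insertNth_apply_same, mul_ite, mul_zero, sum_ite_eq', mem_univ, if_true,
    Fin.prod_univ_erase_eq_prod_succAbove, Fin.insertNth_apply_succAbove, hc.apply_insertNth,
    homForm]

lemma hasDerivAt_homForm {c : (Fin (N + 1) → Fin n) → ℝ} (hc : IsSymmCoeff c)
    (q : Fin n → ℝ) (k : Fin n) :
    HasDerivAt (fun x => homForm c (update q k x))
      ((N + 1) * homForm (fun ι => c (Fin.cons k ι)) q) (q k) := by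
  refine (HasDerivAt.fun_sum (u := univ) fun ι _ =>
    (hasDerivAt_prod_update ι q k).const_mul (c ι)).congr_deriv ?_
  simp_rw [mul_sum]
  rw [sum_comm]
  simp only [hc.sum_mul_ite_prod_erase, sum_const, card_univ, Fintype.card_fin, nsmul_eq_mul]
  push_cast
  ring

end IsSymmCoeff

lemma pd_congr_of_eqOn {n : ℕ} {f g : (Fin n → ℝ) → ℝ} {U : Set (Fin n → ℝ)} {q : Fin n → ℝ}
    (hU : IsOpen U) (hq : q ∈ U) (hfg : Set.EqOn f g U) (k : Fin n) : pd f k q = pd g k q := by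
  have hline : Continuous fun x : ℝ => update q k x := continuous_const.update k continuous_id
  refine Filter.EventuallyEq.deriv_eq ?_
  filter_upwards [hline.continuousAt.preimage_mem_nhds (hU.mem_nhds (by simpa using hq))]
    with x hx using hfg hx

section CartanMetric

variable {n M : ℕ} {a : (Fin (M + 3) → Fin n) → ℝ} {q : Fin n → ℝ}

lemma aSym.isSymmCoeff (hsym : aSym a) : IsSymmCoeff a := hsym

lemma isOpen_Afun_pos : IsOpen {q | 0 < Afun a q} :=
  isOpen_lt continuous_const (by unfold Afun; fun_prop)

lemma Kfun_pos (hq : 0 < Afun a q) : 0 < Kfun a q := Real.rpow_pos_of_pos hq _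

lemma Kfun_pow (hq : 0 ≤ Afun a q) : Kfun a q ^ (M + 3) = Afun a q := by
  rw [Kfun, ← Real.rpow_natCast, ← Real.rpow_mul hq]
  push_cast
  rw [one_div_mul_cancel (by positivity), Real.rpow_one]

lemma aU2_comm (hsym : aSym a) (i j : Fin n) : aU2 a i j q = aU2 a j i q := by
  simp only [aU2, hsym.isSymmCoeff.apply_cons_cons i j]

lemma hasDerivAt_Kfun (hsym : aSym a) (hq : 0 < Afun a q) (k : Fin n) :
    HasDerivAt (fun x => Kfun a (update q k x)) (aU1 a k q) (q k) := by
  have hA := (hsym.isSymmCoeff.hasDerivAt_homForm q k).rpow_const (p := 1 / (M + 3))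
    (Or.inl (by rw [update_eq_self]; exact hq.ne'))
  refine hA.congr_deriv ?_
  have hK := (Kfun_pos hq).ne'
  rw [update_eq_self, show homForm a q = Afun a q from rfl, Real.rpow_sub_one hq.ne', ← Kfun,
    ← Kfun_pow hq.le, aU1, homForm]
  push_cast
  field_simp
  ring

lemma hasDerivAt_homForm_div_Kfun_pow (hsym : aSym a) (hq : 0 < Afun a q) {N : ℕ}
    {c : (Fin (N + 1) → Fin n) → ℝ} (hc : IsSymmCoeff c) (k : Fin n) :
    HasDerivAt (fun x => homForm c (update q k x) / Kfun a (update q k x) ^ (N + 1))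
      ((N + 1) / Kfun a q * (homForm (fun ι => c (Fin.cons k ι)) q / Kfun a q ^ N -
        homForm c q / Kfun a q ^ (N + 1) * aU1 a k q)) (q k) := by
  have hK := (Kfun_pos hq).ne'
  refine ((hc.hasDerivAt_homForm q k).fun_div ((hasDerivAt_Kfun hsym hq k).pow (N + 1))
    (by simpa using hK)).congr_deriv ?_
  simp only [Pi.pow_apply, update_eq_self, add_tsub_cancel_right]
  field_simp
  push_cast
  ring

lemma hasDerivAt_aU1 (hsym : aSym a) (hq : 0 < Afun a q) (i k : Fin n) :
    HasDerivAt (fun x => aU1 a i (update q k x))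
      ((M + 2) / Kfun a q * (aU2 a i k q - aU1 a i q * aU1 a k q)) (q k) := by
  refine (hasDerivAt_homForm_div_Kfun_pow hsym hq (N := M + 1)
    (hsym.isSymmCoeff.cons i) k).congr_deriv ?_
  simp only [aU1, aU2, homForm]
  push_cast
  ring

lemma hasDerivAt_aU2 (hsym : aSym a) (hq : 0 < Afun a q) (i j k : Fin n) :
    HasDerivAt (fun x => aU2 a i j (update q k x))
      ((M + 1) / Kfun a q * (aU3 a i j k q - aU2 a i j q * aU1 a k q)) (q k) := by
  refine (hasDerivAt_homForm_div_Kfun_pow hsym hq (N := M)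
    ((hsym.isSymmCoeff.cons i).cons j) k).congr_deriv ?_
  simp only [aU2, aU3, homForm]

lemma pd_Kfun_sq (hsym : aSym a) (hq : 0 < Afun a q) (j : Fin n) :
    pd (fun r => Kfun a r ^ 2) j q = 2 * Kfun a q * aU1 a j q := by
  have h := (hasDerivAt_Kfun hsym hq j).pow 2
  simp only [update_eq_self] at h
  exact h.deriv.trans (by ring)

lemma gU_eq (hsym : aSym a) (hq : 0 < Afun a q) (i j : Fin n) :
    gU a i j q = (M + 2) * aU2 a i j q - (M + 1) * aU1 a i q * aU1 a j q := by
  have hderiv := ((hasDerivAt_Kfun hsym hq i).const_mul 2).mul (hasDerivAt_aU1 hsym hq j i)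
  simp only [update_eq_self] at hderiv
  rw [gU, pd_congr_of_eqOn isOpen_Afun_pos hq (fun r hr => pd_Kfun_sq hsym hr j) i,
    show pd (fun r => 2 * Kfun a r * aU1 a j r) i q = _ from hderiv.deriv, aU2_comm hsym j i]
  field_simp [(Kfun_pos hq).ne']
  ring

end CartanMetric

theorem stmt_5_general {n M : ℕ} (a : (Fin (M + 3) → Fin n) → ℝ)
    (hsym : aSym a) (p : Fin n → ℝ) (hA : 0 < Afun a p) :
    ∀ i j k : Fin n,
      CU a i j k p = -((M + 2 : ℝ) * (M + 1) / (2 * Kfun a p)) *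
        (aU3 a i j k p - aU2 a i j p * aU1 a k p - aU2 a j k p * aU1 a i p -
          aU2 a k i p * aU1 a j p + 2 * (aU1 a i p * aU1 a j p * aU1 a k p)) := by
  intro i j k
  have hderiv := ((hasDerivAt_aU2 hsym hA i j k).const_mul (M + 2 : ℝ)).sub
    (((hasDerivAt_aU1 hsym hA i k).const_mul (M + 1 : ℝ)).mul (hasDerivAt_aU1 hsym hA j k))
  simp only [update_eq_self] at hderiv
  rw [CU, pd_congr_of_eqOn isOpen_Afun_pos hA (fun q hq => gU_eq hsym hq i j) k,
    show pd (fun q => (M + 2) * aU2 a i j q - (M + 1) * aU1 a i q * aU1 a j q) k p = _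
      from hderiv.deriv, aU2_comm hsym k i]
  field_simp [(Kfun_pos hA).ne']
  ring

/-- `C^{ijk} = -((m-1)(m-2)/(2K)) (a^{ijk} - a^{ij}a^k - a^{jk}a^i
- a^{ki}a^j + 2 a^i a^j a^k)`, where `m = M + 3`. -/
theorem stmt_5 {n M : ℕ} (hn : 4 ≤ n) (a : (Fin (M + 3) → Fin n) → ℝ)
    (hsym : aSym a) (p : Fin n → ℝ) (hA : 0 < Afun a p) :
    ∀ i j k : Fin n,
      CU a i j k p = -((M + 2 : ℝ) * (M + 1) / (2 * Kfun a p)) *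
        (aU3 a i j k p - aU2 a i j p * aU1 a k p - aU2 a j k p * aU1 a i p -
          aU2 a k i p * aU1 a j p + 2 * (aU1 a i p * aU1 a j p * aU1 a k p)) :=
  stmt_5_general a hsym p hA
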